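/- arXiv:1705.07235 — 5 statements merged into one kernel-verified Lean document; each statement's English description precedes it below -/
import Mathlib

section
/- If c_1,...,c_N are real numbers with 0 < m ≤ c_k ≤ M for all k, the product of the c_k is at least C, and m^N ≤ C ≤ M^N, then the sum of 1/c_k^2 over k is at most (N-v)/m^2 + (v-1)/M^2 + (m^{N-v} M^{v-1}/C)^2, where v is the least integer j such that M^j m^{N-j} ≥ C. -/
/-!
Two factors `x, y ∈ [m, M]` can be replaced by an endpoint `e ∈ {m, M}` and `xy / e ∈ [m, M]`
without changing the product and without decreasing `1/x² + 1/y²`: take `e = M` if `xy ≥ mM`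
and `e = m` otherwise. Repeating this, all factors but one move to the endpoints, say `a` of them
to `m`, `b` to `M`, and the last one `t` satisfies `C ≤ m^a M^b t ≤ m^a M^(b+1)`, so `v ≤ b + 1`.
If `v = b + 1` the bound is read off directly from `1/t ≤ m^a M^b / C`. If `v ≤ b`, replacing `t`
and `b - v` of the factors `M` by `m` only increases the sum of `1/c²`, and the remaining excess
`1/M²` is at most the last term of the bound because `M^v m^(N-v) ≥ C`.
-/

open Finset

lemma one_div_sq_add_one_div_sq_le {x y z : ℝ} (hx : 0 < x) (hy : 0 < y) (hz : 0 < z)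
    (h : 0 ≤ (x ^ 2 - z ^ 2) * (y ^ 2 - z ^ 2)) :
    1 / x ^ 2 + 1 / y ^ 2 ≤ 1 / z ^ 2 + 1 / (x * y / z) ^ 2 := by
  have key : 1 / z ^ 2 + 1 / (x * y / z) ^ 2 - (1 / x ^ 2 + 1 / y ^ 2) =
      (x ^ 2 - z ^ 2) * (y ^ 2 - z ^ 2) / (x ^ 2 * y ^ 2 * z ^ 2) := by
    field_simp
    ring
  have : 0 ≤ (x ^ 2 - z ^ 2) * (y ^ 2 - z ^ 2) / (x ^ 2 * y ^ 2 * z ^ 2) := by positivity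
  linarith

lemma one_div_sq_le_div_sq {x A C : ℝ} (hx : 0 < x) (hC : 0 < C) (h : C ≤ A * x) :
    1 / x ^ 2 ≤ (A / C) ^ 2 := by
  rw [← one_div_pow]
  refine pow_le_pow_left₀ (by positivity) ?_ 2
  rwa [div_le_div_iff₀ hx hC, one_mul]

section Smoothing

variable {m M : ℝ}

lemma exists_merge_into_endpoint (hm : 0 < m) {t x : ℝ} (ht : t ∈ Set.Icc m M)
    (hx : x ∈ Set.Icc m M) :
    ∃ i j : ℕ, i + j = 1 ∧ ∃ u ∈ Set.Icc m M, m ^ i * M ^ j * u = t * x ∧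
      1 / t ^ 2 + 1 / x ^ 2 ≤ i / m ^ 2 + j / M ^ 2 + 1 / u ^ 2 := by
  obtain ⟨htm, htM⟩ := ht
  obtain ⟨hxm, hxM⟩ := hx
  have ht0 : 0 < t := hm.trans_le htm
  have hx0 : 0 < x := hm.trans_le hxm
  have hmM : m ≤ M := htm.trans htM
  have hM : 0 < M := hm.trans_le hmM
  rcases le_or_gt (m * M) (t * x) with hbig | hsmall
  · refine ⟨0, 1, rfl, t * x / M, ⟨?_, ?_⟩, by field_simp, ?_⟩
    · rw [le_div_iff₀ hM]; exact hbig
    · rw [div_le_iff₀ hM]; nlinarith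
    · have h := one_div_sq_add_one_div_sq_le ht0 hx0 hM
        (mul_nonneg_of_nonpos_of_nonpos (by nlinarith) (by nlinarith))
      simpa using h
  · refine ⟨1, 0, rfl, t * x / m, ⟨?_, ?_⟩, by field_simp, ?_⟩
    · rw [le_div_iff₀ hm]; nlinarith
    · rw [div_le_iff₀ hm]; linarith
    · have h := one_div_sq_add_one_div_sq_le ht0 hx0 hm
        (mul_nonneg (by nlinarith) (by nlinarith))
      simpa using h

theorem Finset.Nonempty.exists_pow_mul_pow_mul_eq_prod_and_sum_one_div_sq_le (hm : 0 < m)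
    {ι : Type*} {s : Finset ι} (hs : s.Nonempty) {c : ι → ℝ} (hc : ∀ i ∈ s, c i ∈ Set.Icc m M) :
    ∃ a b : ℕ, a + b + 1 = #s ∧ ∃ t ∈ Set.Icc m M, m ^ a * M ^ b * t = ∏ i ∈ s, c i ∧
      ∑ i ∈ s, 1 / c i ^ 2 ≤ a / m ^ 2 + b / M ^ 2 + 1 / t ^ 2 := by
  induction hs using Finset.Nonempty.cons_induction with
  | singleton k => exact ⟨0, 0, by simp, c k, hc k (mem_singleton_self k), by simp, by simp⟩
  | cons k s _ _ ih =>
    obtain ⟨a, b, hcard, t, ht, hprod, hsum⟩ :=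
      ih fun i hi ↦ hc i (mem_cons_of_mem hi)
    obtain ⟨i, j, hij, u, hu, hmerge, hineq⟩ :=
      exists_merge_into_endpoint hm ht (hc k (mem_cons_self k s))
    refine ⟨a + i, b + j, by rw [card_cons]; omega, u, hu, ?_, ?_⟩
    · rw [prod_cons, ← hprod]
      linear_combination (m ^ a * M ^ b) * hmerge
    · rw [sum_cons]
      push_cast
      have : ((a : ℝ) + i) / m ^ 2 + (b + j) / M ^ 2 + 1 / u ^ 2 =
          a / m ^ 2 + b / M ^ 2 + (i / m ^ 2 + j / M ^ 2 + 1 / u ^ 2) := by ring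
      linarith

end Smoothing

section LeastExponent

variable {m M C : ℝ} {a b : ℕ} {v : ℤ}

lemma pos_of_isLeast_le_zpow_mul_zpow {n : ℕ} (hm : 0 < m) (hM : 0 < M)
    (hv : IsLeast {j : ℤ | C ≤ M ^ j * m ^ ((n : ℤ) - j)} v) : 0 < C := by
  by_contra! hC
  have := hv.2 (show v - 1 ∈ _ from hC.trans (by positivity))
  omega

lemma le_add_one_of_isLeast_le_zpow_mul_zpow {t : ℝ} (hm : 0 ≤ m) (hM : 0 ≤ M) (htM : t ≤ M)
    (hCt : C ≤ m ^ a * M ^ b * t)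
    (hv : IsLeast {j : ℤ | C ≤ M ^ j * m ^ (((a + b + 1 : ℕ) : ℤ) - j)} v) : v ≤ b + 1 := by
  refine hv.2 ?_
  show C ≤ M ^ ((b : ℤ) + 1) * m ^ (((a + b + 1 : ℕ) : ℤ) - ((b : ℤ) + 1))
  rw [show ((a + b + 1 : ℕ) : ℤ) - ((b : ℤ) + 1) = (a : ℕ) by push_cast; ring,
    show (b : ℤ) + 1 = (b + 1 : ℕ) by push_cast; ring, zpow_natCast, zpow_natCast]
  calc C ≤ m ^ a * M ^ b * t := hCt
    _ ≤ m ^ a * M ^ b * M := by gcongr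
    _ = M ^ (b + 1) * m ^ a := by ring

lemma endpoint_sum_le_of_isLeast {t : ℝ} (hm : 0 < m) (ht : t ∈ Set.Icc m M)
    (hCt : C ≤ m ^ a * M ^ b * t)
    (hv : IsLeast {j : ℤ | C ≤ M ^ j * m ^ (((a + b + 1 : ℕ) : ℤ) - j)} v) :
    a / m ^ 2 + b / M ^ 2 + 1 / t ^ 2 ≤
      (((a + b + 1 : ℕ) : ℝ) - v) / m ^ 2 + ((v : ℝ) - 1) / M ^ 2 +
        (m ^ (((a + b + 1 : ℕ) : ℤ) - v) * M ^ (v - 1) / C) ^ 2 := by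
  obtain ⟨htm, htM⟩ := ht
  have hmM : m ≤ M := htm.trans htM
  have hM : 0 < M := hm.trans_le hmM
  have hC : 0 < C := pos_of_isLeast_le_zpow_mul_zpow hm hM hv
  rcases (le_add_one_of_isLeast_le_zpow_mul_zpow hm.le hM.le htM hCt hv).eq_or_lt with rfl | hvb
  · rw [show ((a + b + 1 : ℕ) : ℤ) - ((b : ℤ) + 1) = (a : ℕ) by push_cast; ring,
      add_sub_cancel_right, zpow_natCast, zpow_natCast]
    have ht := one_div_sq_le_div_sq (hm.trans_le htm) hC hCt
    have e : ((a : ℝ) + b + 1 - (b + 1)) / m ^ 2 + ((b : ℝ) + 1 - 1) / M ^ 2 =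
        a / m ^ 2 + b / M ^ 2 := by ring
    push_cast
    linarith
  · have hvb : (v : ℝ) ≤ b := by exact_mod_cast Int.lt_add_one_iff.1 hvb
    have hCM : C ≤ m ^ (((a + b + 1 : ℕ) : ℤ) - v) * M ^ (v - 1) * M := by
      rw [mul_assoc, zpow_sub_one₀ hM.ne', inv_mul_cancel_right₀ hM.ne', mul_comm]
      exact hv.1
    have hM2 := one_div_sq_le_div_sq hM hC hCM
    have ht : 1 / t ^ 2 ≤ 1 / m ^ 2 := one_div_le_one_div_of_le (by positivity) (by gcongr)
    have hmM2 : 1 / M ^ 2 ≤ 1 / m ^ 2 := one_div_le_one_div_of_le (by positivity) (by gcongr)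
    have e : (((a + b + 1 : ℕ) : ℝ) - v) / m ^ 2 + ((v : ℝ) - 1) / M ^ 2 + 1 / M ^ 2 -
        (a / m ^ 2 + b / M ^ 2 + 1 / m ^ 2) = (b - v) * (1 / m ^ 2 - 1 / M ^ 2) := by
      push_cast; ring
    linarith [mul_nonneg (sub_nonneg.2 hvb) (sub_nonneg.2 hmM2)]

end LeastExponent

theorem stmt_0_general (N : ℕ) (hN : 0 < N) (c : Fin N → ℝ) (m M C : ℝ)
    (hm : 0 < m)
    (hc : ∀ k, m ≤ c k ∧ c k ≤ M)
    (hprod : C ≤ ∏ k, c k)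
    (v : ℤ)
    (hv : IsLeast {j : ℤ | C ≤ M ^ j * m ^ ((N : ℤ) - j)} v) :
    ∑ k, 1 / (c k) ^ 2 ≤
      ((N : ℝ) - v) / m ^ 2 + ((v : ℝ) - 1) / M ^ 2 +
        (m ^ ((N : ℤ) - v) * M ^ (v - 1) / C) ^ 2 := by
  obtain ⟨a, b, hcard, t, ht, hprod_eq, hsum⟩ :=
    (univ_nonempty_iff.2 ⟨⟨0, hN⟩⟩).exists_pow_mul_pow_mul_eq_prod_and_sum_one_div_sq_le hm
      fun k _ ↦ hc k
  rw [card_univ, Fintype.card_fin] at hcard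
  subst hcard
  exact hsum.trans (endpoint_sum_le_of_isLeast hm ht (hprod_eq ▸ hprod) hv)

theorem stmt_0 (N : ℕ) (hN : 0 < N) (c : Fin N → ℝ) (m M C : ℝ)
    (hm : 0 < m) (hmM : m ≤ M)
    (hc : ∀ k, m ≤ c k ∧ c k ≤ M)
    (hprod : C ≤ ∏ k, c k)
    (hCl : m ^ N ≤ C) (hCu : C ≤ M ^ N)
    (v : ℤ)
    (hv : IsLeast {j : ℤ | C ≤ M ^ j * m ^ ((N : ℤ) - j)} v) :
    ∑ k, 1 / (c k) ^ 2 ≤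
      ((N : ℝ) - v) / m ^ 2 + ((v : ℝ) - 1) / M ^ 2 +
        (m ^ ((N : ℤ) - v) * M ^ (v - 1) / C) ^ 2 :=
  stmt_0_general N hN c m M C hm hc hprod v hv
end

section
/- Let a ∈ (0,1) and ζ ∈ ℂ with |ζ| ≤ 1, and set γ = (ζ - a)/(aζ - 1). If |γ| ≤ 1/(1 + a - a²), then |ζ - a| ≤ 1. -/
/-! Writing `a ζ - 1 = a (ζ - a) - (1 - a²)` gives `‖a ζ - 1‖ ≤ a r + 1 - a²` with `r = ‖ζ - a‖`.
Since `ζ - a = γ (a ζ - 1)`, the bound on `‖γ‖` yields `r (1 + a - a²) ≤ a r + 1 - a²`,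
that is `r (1 - a²) ≤ 1 - a²`, so `r ≤ 1`. -/

lemma Complex.norm_ofReal_mul_sub_one_le (a : ℝ) (ha : 0 ≤ a) (ha1 : a ≤ 1) (ζ : ℂ) :
    ‖(a : ℂ) * ζ - 1‖ ≤ a * ‖ζ - a‖ + (1 - a ^ 2) := by
  have hsplit : (a : ℂ) * ζ - 1 = a * (ζ - a) - ((1 - a ^ 2 : ℝ) : ℂ) := by push_cast; ring
  calc ‖(a : ℂ) * ζ - 1‖ ≤ ‖(a : ℂ) * (ζ - a)‖ + ‖((1 - a ^ 2 : ℝ) : ℂ)‖ :=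
        hsplit ▸ norm_sub_le _ _
    _ = a * ‖ζ - a‖ + (1 - a ^ 2) := by
        rw [norm_mul, Complex.norm_real, Complex.norm_real, Real.norm_of_nonneg ha,
          Real.norm_of_nonneg (by nlinarith)]

lemma le_one_of_le_mul_add_one_sub_sq {a r : ℝ} (ha : 0 < a) (ha1 : a < 1)
    (h : r * (1 + a - a ^ 2) ≤ a * r + (1 - a ^ 2)) : r ≤ 1 := by
  have h1a : 0 < 1 - a ^ 2 := by nlinarith
  nlinarith

theorem stmt_2_general (a : ℝ) (ha : 0 < a) (ha1 : a < 1) (ζ : ℂ)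
    (hne : (a : ℂ) * ζ ≠ 1)
    (γ : ℂ) (hγ : γ = (ζ - (a : ℂ)) / ((a : ℂ) * ζ - 1))
    (hle : ‖γ‖ ≤ 1 / (1 + a - a ^ 2)) :
    ‖ζ - (a : ℂ)‖ ≤ 1 := by
  have hpos : 0 < 1 + a - a ^ 2 := by nlinarith
  have hd : ‖(a : ℂ) * ζ - 1‖ ≠ 0 := norm_ne_zero_iff.mpr (sub_ne_zero.mpr hne)
  apply le_one_of_le_mul_add_one_sub_sq ha ha1
  rw [← le_div_iff₀ hpos, div_eq_mul_one_div, mul_comm]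
  calc ‖ζ - a‖ = ‖γ‖ * ‖(a : ℂ) * ζ - 1‖ := by rw [hγ, norm_div, div_mul_cancel₀ _ hd]
    _ ≤ 1 / (1 + a - a ^ 2) * (a * ‖ζ - a‖ + (1 - a ^ 2)) :=
        mul_le_mul hle (Complex.norm_ofReal_mul_sub_one_le a ha.le ha1.le ζ) (norm_nonneg _)
          (by positivity)

theorem stmt_2 (a : ℝ) (ha : 0 < a) (ha1 : a < 1) (ζ : ℂ) (hζ : ‖ζ‖ ≤ 1)
    (hne : (a : ℂ) * ζ ≠ 1)
    (γ : ℂ) (hγ : γ = (ζ - (a : ℂ)) / ((a : ℂ) * ζ - 1))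
    (hle : ‖γ‖ ≤ 1 / (1 + a - a ^ 2)) :
    ‖ζ - (a : ℂ)‖ ≤ 1 :=
  stmt_2_general a ha ha1 ζ hne γ hγ hle
end

section
/- For m = 1/4 and any fixed a ∈ [0.845, 1], the function f(x) = (x² - 1)/((1 - x^{1/4})(a + x)²) is strictly increasing on the interval [0.46, 1), i.e., f'(x) > 0 for all x ∈ [0.46, 1). -/
/-!
With `u = x ^ (1/4)` we have `x² - 1 = -(1 - u)(1 + u + u² + u³)(1 + x)`, so the factor `1 - u`
cancels and `f x = g u` with `g u = -(1 + u⁴)(1 + u + u² + u³) / (a + u⁴)²` (`quarticRootQuot`).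
The numerator of `g'` is `8u³S(u) - (a + u⁴)S'(u)` with `S(u) = 1 + u + ⋯ + u⁷`; it decreases in
`a`, and at `a = 1` it is a degree-ten polynomial whose largest real root is `≈ 0.82341`, just
below `0.46 ^ (1/4) ≈ 0.82355`. Positivity on `[0.8235, ∞)` is certified by dividing by
`u - 0.8235`.
-/

lemma quarticRootPoly_pos {u : ℝ} (hu : 1647 / 2000 ≤ u) :
    0 < u^10 + 2*u^9 + 3*u^8 + 4*u^7 - 2*u^6 + 2*u^4 + 4*u^3 - 3*u^2 - 2*u - 1 := by
  lift u to NNReal using by linarith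
  -- quotient and (positive) remainder of the division by `u - 1647/2000`
  have hQ : (0 : ℝ) ≤ u^9 + (5647/2000)*u^8 + (21300609/4000000)*u^7
      + (67082103023/8000000000)*u^6 + (78484223678881/16000000000000)*u^5
      + (129263516399117007/32000000000000000)*u^4
      + (340897011509345710529/64000000000000000000)*u^3
      + (1073457377955892385241263/128000000000000000000000)*u^2
      + (999984301493354758492360161/256000000000000000000000000)*u
      + 622974144559555287236917185167/512000000000000000000000000000 := by
    positivity
  nlinarith [mul_nonneg (sub_nonneg.2 hu) hQ]

lemma quarticRootNumerator_pos {a u : ℝ} (ha : a ≤ 1) (hu : 1647 / 2000 ≤ u) :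
    0 < 8*u^3*(u^7 + u^6 + u^5 + u^4 + u^3 + u^2 + u + 1)
      - (a + u^4)*(7*u^6 + 6*u^5 + 5*u^4 + 4*u^3 + 3*u^2 + 2*u + 1) := by
  have hu0 : 0 ≤ u := by linarith
  have hS' : 0 ≤ 7*u^6 + 6*u^5 + 5*u^4 + 4*u^3 + 3*u^2 + 2*u + 1 := by positivity
  nlinarith [quarticRootPoly_pos hu, mul_nonneg (sub_nonneg.2 ha) hS']

noncomputable def quarticRootQuot (a u : ℝ) : ℝ :=
  -((1 + u^4) * (1 + u + u^2 + u^3)) / (a + u^4)^2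

lemma rpow_quarter_pow_four {x : ℝ} (hx : 0 ≤ x) : (x ^ ((1 : ℝ) / 4)) ^ 4 = x := by
  simpa using Real.rpow_inv_natCast_pow (n := 4) hx (by norm_num)

lemma div_eq_quarticRootQuot (a : ℝ) {x : ℝ} (hx0 : 0 ≤ x) (hx1 : x < 1) :
    (x^2 - 1) / ((1 - x ^ ((1 : ℝ) / 4)) * (a + x)^2) =
      quarticRootQuot a (x ^ ((1 : ℝ) / 4)) := by
  have hu1 : x ^ ((1 : ℝ) / 4) < 1 := Real.rpow_lt_one hx0 hx1 (by norm_num)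
  set u := x ^ ((1 : ℝ) / 4)
  rw [quarticRootQuot, ← rpow_quarter_pow_four hx0,
    show (u^4)^2 - 1 = (1 - u) * -((1 + u^4) * (1 + u + u^2 + u^3)) by ring,
    mul_div_mul_left _ _ (sub_ne_zero.2 hu1.ne')]

lemma hasDerivAt_quarticRootQuot {a u : ℝ} (h : a + u^4 ≠ 0) :
    HasDerivAt (quarticRootQuot a)
      ((8*u^3*(u^7 + u^6 + u^5 + u^4 + u^3 + u^2 + u + 1)
        - (a + u^4)*(7*u^6 + 6*u^5 + 5*u^4 + 4*u^3 + 3*u^2 + 2*u + 1)) / (a + u^4)^3) u := by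
  have hN : HasDerivAt (fun v : ℝ => -((1 + v^4) * (1 + v + v^2 + v^3)))
      (-(7*u^6 + 6*u^5 + 5*u^4 + 4*u^3 + 3*u^2 + 2*u + 1)) u := by
    have := (((hasDerivAt_id u).pow 4).const_add 1).mul
      ((((hasDerivAt_id u).const_add 1).add ((hasDerivAt_id u).pow 2)).add
        ((hasDerivAt_id u).pow 3))
    refine this.neg.congr_deriv ?_
    simp only [id, Pi.pow_apply, Pi.add_apply]
    ring
  have hD : HasDerivAt (fun v : ℝ => (a + v^4)^2) (2 * (a + u^4) * (4 * u^3)) u := by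
    refine ((((hasDerivAt_id u).pow 4).const_add a).pow 2).congr_deriv ?_
    simp only [id, Pi.pow_apply]
    ring
  refine (hN.div hD (pow_ne_zero 2 h)).congr_deriv ?_
  field_simp
  ring

theorem stmt_3 (a : ℝ) (ha : 0.845 ≤ a) (ha1 : a ≤ 1)
    (f : ℝ → ℝ)
    (hf : f = fun x => (x ^ 2 - 1) / ((1 - x ^ ((1 : ℝ) / 4)) * (a + x) ^ 2)) :
    ∀ x ∈ Set.Ico (0.46 : ℝ) 1, 0 < deriv f x := by
  rintro x ⟨hx, hx1⟩
  have hx0 : 0 < x := by norm_num at hx; linarith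
  have hax : 0 < a + (x ^ ((1 : ℝ) / 4)) ^ 4 := by
    rw [rpow_quarter_pow_four hx0.le]; norm_num at ha; linarith
  have hu : 1647 / 2000 ≤ x ^ ((1 : ℝ) / 4) := by
    rw [← pow_le_pow_iff_left₀ (by norm_num) (by positivity) (by norm_num : 4 ≠ 0),
      rpow_quarter_pow_four hx0.le]
    norm_num at hx ⊢; linarith
  have hfg : f =ᶠ[nhds x] quarticRootQuot a ∘ fun y => y ^ ((1 : ℝ) / 4) := by
    filter_upwards [Ioo_mem_nhds hx0 hx1] with y hy
    simp only [hf, Function.comp, div_eq_quarticRootQuot a hy.1.le hy.2]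
  have hroot := Real.hasDerivAt_rpow_const (p := (1 : ℝ) / 4) (Or.inl hx0.ne')
  rw [hfg.deriv_eq, ((hasDerivAt_quarticRootQuot hax.ne').comp x hroot).deriv]
  exact mul_pos (div_pos (quarticRootNumerator_pos ha1 hu) (by positivity)) (by positivity)
end

section
/- For all a ∈ [0.845, 1] and R = 0.46, with λ = 1 - (1 - aR)^{1/9}, the inequality (9 - 4a²/(1+a²) - 6a)·(aR+1)/(R+a) - √(1 + (1-a²)λ(λ+2))·(1 + a - a²)^7 ≥ 0 holds. -/
/-!
For `a ∈ [0.845, 1]` the point `t = 1 - 0.46 a` lies in `[0.54, 0.6114]`, where the concave map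
`t ↦ t ^ (1/9)` stays above the affine function `0.8356 + 0.1817 t` (a slightly lowered chord), so
`λ ≤ lambdaUpper a`. Since `√(1 + x) ≤ 1 + x / 2` and `λ ↦ λ (λ + 2)` is increasing, what remains is a
polynomial inequality of degree 21 in `a`. Its defect vanishes at `a = 1` and has positive
coefficients in the degree-21 Bernstein basis of `[0.845, 1]`, which is the certificate handed to
`linarith`; the chord bound is certified the same way in degree 9.
-/

open Real

lemma sub_pow_mul_sub_pow_nonneg {x lo hi : ℝ} (hlo : lo ≤ x) (hhi : x ≤ hi) (n j : ℕ) :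
    0 ≤ (x - lo) ^ j * (hi - x) ^ (n - j) := by
  have : 0 ≤ x - lo := sub_nonneg.2 hlo
  have : 0 ≤ hi - x := sub_nonneg.2 hhi
  positivity

lemma le_rpow_one_div_of_pow_le {x t : ℝ} {n : ℕ} (hn : n ≠ 0) (hx : 0 ≤ x) (h : x ^ n ≤ t) :
    x ≤ t ^ ((1 : ℝ) / n) := by
  rw [one_div, le_rpow_inv_iff_of_pos hx ((pow_nonneg hx n).trans h) (by positivity), rpow_natCast]
  exact h

lemma chord_pow_nine_le {t : ℝ} (ht : 0.54 ≤ t) (ht' : t ≤ 0.6114) :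
    (0.8356 + 0.1817 * t) ^ 9 ≤ t := by
  have b := sub_pow_mul_sub_pow_nonneg ht ht' 9
  linarith [b 0, b 1, b 2, b 3, b 4, b 5, b 6, b 7, b 8, b 9]

lemma chord_le_rpow_one_div_nine {t : ℝ} (ht : 0.54 ≤ t) (ht' : t ≤ 0.6114) :
    0.8356 + 0.1817 * t ≤ t ^ ((1 : ℝ) / 9) := by
  exact_mod_cast le_rpow_one_div_of_pow_le (n := 9) (by norm_num) (by linarith)
    (chord_pow_nine_le ht ht')

noncomputable def lambdaUpper (a : ℝ) : ℝ := 1 - (0.8356 + 0.1817 * (1 - a * 0.46))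

lemma lambda_mem_Icc {a : ℝ} (ha : 0.845 ≤ a) (ha1 : a ≤ 1) :
    1 - (1 - a * 0.46) ^ ((1 : ℝ) / 9) ∈ Set.Icc 0 (lambdaUpper a) := by
  have hroot_le_one : (1 - a * 0.46) ^ ((1 : ℝ) / 9) ≤ 1 :=
    rpow_le_one (by linarith) (by linarith) (by norm_num)
  have hchord := chord_le_rpow_one_div_nine (t := 1 - a * 0.46) (by linarith) (by linarith)
  exact ⟨by linarith, by unfold lambdaUpper; linarith⟩

lemma lambdaUpper_majorant_le {a : ℝ} (ha : 0.845 ≤ a) (ha1 : a ≤ 1) :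
    (1 + (1 - a ^ 2) * lambdaUpper a * (lambdaUpper a + 2) / 2) * (1 + a - a ^ 2) ^ 7 ≤
      (9 - 4 * a ^ 2 / (1 + a ^ 2) - 6 * a) * (a * 0.46 + 1) / (0.46 + a) := by
  have hrat : 9 - 4 * a ^ 2 / (1 + a ^ 2) - 6 * a =
      (9 * (1 + a ^ 2) - 4 * a ^ 2 - 6 * a * (1 + a ^ 2)) / (1 + a ^ 2) := by
    field_simp
  rw [le_div_iff₀ (by linarith), hrat, div_mul_eq_mul_div, le_div_iff₀ (by positivity)]
  have b := sub_pow_mul_sub_pow_nonneg ha ha1 21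
  unfold lambdaUpper
  linarith [b 0, b 1, b 2, b 3, b 4, b 5, b 6, b 7, b 8, b 9, b 10, b 11, b 12, b 13, b 14,
    b 15, b 16, b 17, b 18, b 19, b 20]

theorem stmt_4 (a : ℝ) (ha : 0.845 ≤ a) (ha1 : a ≤ 1) :
    let R : ℝ := 0.46
    let l : ℝ := 1 - (1 - a * R) ^ ((1 : ℝ) / 9)
    (9 - 4 * a ^ 2 / (1 + a ^ 2) - 6 * a) * (a * R + 1) / (R + a) -
      Real.sqrt (1 + (1 - a ^ 2) * l * (l + 2)) * (1 + a - a ^ 2) ^ 7 ≥ 0 := by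
  dsimp only
  obtain ⟨hl0, hlL⟩ := lambda_mem_Icc ha ha1
  set l := 1 - (1 - a * 0.46) ^ ((1 : ℝ) / 9)
  have hc : 0 ≤ 1 - a ^ 2 := by nlinarith
  have hp : 0 ≤ 1 + a - a ^ 2 := by nlinarith
  have hL : 0 ≤ lambdaUpper a := hl0.trans hlL
  have hX : 0 ≤ (1 - a ^ 2) * l * (l + 2) := mul_nonneg (mul_nonneg hc hl0) (by linarith)
  have hsqrt : √(1 + (1 - a ^ 2) * l * (l + 2)) ≤
      1 + (1 - a ^ 2) * lambdaUpper a * (lambdaUpper a + 2) / 2 :=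
    calc √(1 + (1 - a ^ 2) * l * (l + 2))
        ≤ 1 + (1 - a ^ 2) * l * (l + 2) / 2 := sqrt_one_add_le (by linarith)
      _ ≤ 1 + (1 - a ^ 2) * lambdaUpper a * (lambdaUpper a + 2) / 2 := by gcongr
  have hprod := mul_le_mul_of_nonneg_right hsqrt (pow_nonneg hp 7)
  linarith [lambdaUpper_majorant_le ha ha1]
end

section
/- For a ∈ [0.845, 1], setting λ = 1 - (1 - 0.46a)^{1/9}, one has λ ≤ sin(π/9). -/
/-! Since `a ≤ 1`, the radicand is at least `0.54 ≥ 0.7 ^ 9`, so `1 - λ ≥ 0.7`; and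
`sin (π / 9) > 0.3` by the cubic Taylor bound `x - x ^ 3 / 6 < sin x`. -/

open Real

theorem le_rpow_inv_natCast_of_pow_le {c x : ℝ} {n : ℕ} (hc : 0 ≤ c) (hn : n ≠ 0)
    (h : c ^ n ≤ x) : c ≤ x ^ (n⁻¹ : ℝ) := by
  have hx : 0 ≤ x := (pow_nonneg hc n).trans h
  refine (pow_le_pow_iff_left₀ hc (rpow_nonneg hx _) hn).mp ?_
  rwa [rpow_inv_natCast_pow hx hn]

theorem three_tenths_lt_sin_pi_div_nine : (0.3 : ℝ) < sin (π / 9) := by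
  have hπ : π / 9 ≤ 0.35 := by linarith [pi_lt_d2]
  calc (0.3 : ℝ) < π / 9 - 0.35 ^ 3 / 6 := by linarith [pi_gt_d6]
    _ ≤ π / 9 - (π / 9) ^ 3 / 6 := by gcongr
    _ < sin (π / 9) := sin_gt_sub_cube (by positivity)

theorem stmt_5_general (a : ℝ) (ha1 : a ≤ 1) :
    1 - (1 - 0.46 * a) ^ ((1 : ℝ) / 9) ≤ Real.sin (π / 9) := by
  have hroot : (0.7 : ℝ) ≤ (1 - 0.46 * a) ^ ((1 : ℝ) / 9) := by
    rw [one_div, ← Nat.cast_ofNat]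
    exact le_rpow_inv_natCast_of_pow_le (by norm_num) (by norm_num) (by linarith)
  linarith [three_tenths_lt_sin_pi_div_nine]

theorem stmt_5 (a : ℝ) (ha : 0.845 ≤ a) (ha1 : a ≤ 1) :
    1 - (1 - 0.46 * a) ^ ((1 : ℝ) / 9) ≤ Real.sin (π / 9) :=
  stmt_5_general a ha1
end
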